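/- Under the stated assumptions, (s_{h_{j+1}}² − s_{h_j}²)/σ_j² = 1 + O(B_j^{−δ/4}·(log B_j)^{1/2}) as j → ∞, and s_{h_{M+1}}² − Σ_{j=1}^M σ_j² = O(B_M^{1−δ/8}·(log B_M)^{1/2}) as M → ∞. -/

import Mathlib

open MeasureTheory Filter Real Set Topology Asymptotics

noncomputable section

/-- The `{+1,−1}`-valued Markov chain of the elephant random walk remembering the very
recent past, with memory parameter `p`: `X_1` is a symmetric sign and each step keeps the
previous sign with probability `p`.  The law is specified through all finite-dimensional
distributions. -/
def IsERWChain {Ω : Type*} [MeasurableSpace Ω] (P : Measure Ω) (p : ℝ)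
    (X : ℕ → Ω → ℝ) : Prop :=
  (∀ k, Measurable (X k)) ∧
  (∀ k ω, X k ω = 1 ∨ X k ω = -1) ∧
  (∀ (n : ℕ) (ε : ℕ → ℝ), (∀ i, ε i = 1 ∨ ε i = -1) →
    P {ω | ∀ i ≤ n, X (i + 1) ω = ε i} =
      ENNReal.ofReal
        ((1 / 2) * ∏ i ∈ Finset.range n, (if ε (i + 1) = ε i then p else 1 - p)))

/-- `S_n = Σ_{k=1}^n a_k X_k`, the ERWVRP with variable step length. -/
def Swalk {Ω : Type*} (a : ℕ → ℝ) (X : ℕ → Ω → ℝ) (n : ℕ) (ω : Ω) : ℝ :=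
  ∑ k ∈ Finset.Icc 1 n, a k * X k ω

/-- `A_n = Σ_{k=1}^n a_k²` -/
def Asum (a : ℕ → ℝ) (n : ℕ) : ℝ := ∑ k ∈ Finset.Icc 1 n, (a k) ^ 2

/-- `s_n² = E[S_n²]` -/
def sn2 {Ω : Type*} [MeasurableSpace Ω] (P : Measure Ω) (a : ℕ → ℝ)
    (X : ℕ → Ω → ℝ) (n : ℕ) : ℝ :=
  ∫ ω, (Swalk a X n ω) ^ 2 ∂P

/-- a standard Brownian motion on a probability space -/
structure IsStdBM {Ω : Type*} [MeasurableSpace Ω] (P : Measure Ω) (B : ℝ → Ω → ℝ) : Prop where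
  meas : ∀ t, Measurable (B t)
  zero : ∀ᵐ ω ∂P, B 0 ω = 0
  cont : ∀ᵐ ω ∂P, Continuous fun t => B t ω
  gauss : ∀ s t : ℝ, 0 ≤ s → s ≤ t →
    P.map (fun ω => B t ω - B s ω) = ProbabilityTheory.gaussianReal 0 ((t - s).toNNReal)
  indep : ∀ (n : ℕ) (ts : Fin (n + 1) → ℝ), Monotone ts → (∀ i, 0 ≤ ts i) →
    ProbabilityTheory.iIndepFun
      (fun i : Fin n => fun ω => B (ts i.succ) ω - B (ts i.castSucc) ω) P

end

noncomputable section

/-- the block sum `Y_j = Σ_{k ∈ (h_j, h_{j+1}]} a_k X_k` -/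
def blockY {Ω : Type*} (a : ℕ → ℝ) (X : ℕ → Ω → ℝ) (h : ℕ → ℕ) (j : ℕ) (ω : Ω) : ℝ :=
  ∑ k ∈ Finset.Icc (h j + 1) (h (j + 1)), a k * X k ω

/-- `σ_j² = E[Y_j²]` -/
def blockVar {Ω : Type*} [MeasurableSpace Ω] (P : Measure Ω) (a : ℕ → ℝ)
    (X : ℕ → Ω → ℝ) (h : ℕ → ℕ) (j : ℕ) : ℝ :=
  ∫ ω, (blockY a X h j ω) ^ 2 ∂P

/-- the hypothesis that `h` is the blocking sequence: `h_1 = 0` and `h_{n+1}` is the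
smallest integer `H` (beyond `h_n`) with `A_H − A_{h_n} ≥ A_{h_n}^{1−δ/2}` -/
def IsBlocking (a : ℕ → ℝ) (δ : ℝ) (h : ℕ → ℕ) : Prop :=
  h 1 = 0 ∧
  ∀ n, 1 ≤ n →
    IsLeast {H : ℕ | h n < H ∧ Asum a (h n) ^ (1 - δ / 2) ≤ Asum a H - Asum a (h n)}
      (h (n + 1))

end

/-!
Since `X` is a stationary Markov chain with `E[X_k X_l] = r ^ |k - l|` for `r = 2p - 1`, all second
moments are explicit quadratic forms in `a`. Writing `S_{h_{j+1}} = S_{h_j} + Y_j` gives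
`s²_{h_{j+1}} = s²_{h_j} + σ_j² + 2 E[S_{h_j} Y_j]`. The correlations decay geometrically, so the
cross term is `O(max_{k ≤ h_{j+1}} a_k²) = O(B_j^{1-δ})`, while for `|r| < 1` the correlation form
is uniformly positive definite, so `σ_j² ≥ c (B_{j+1} - B_j) ≥ c B_j^{1-δ/2}`. This gives the first
estimate, even with the rate `B_j^{-δ/2}`. For the second one the cross terms are summed: since
`B_{j+1} ≥ B_j (1 + B_j^{-δ/2})`, at most `O(B_M^{δ/2} log B_M)` blocks precede `M`, so the sum is
`O(B_M^{1-δ/2} log B_M)`.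
-/

section SignPatterns

open Finset

/-- A path of signs is encoded by the set of times carrying `+1`; index `i` stands for `X (i + 1)`,
as in `IsERWChain`. -/
def signPattern (S : Finset ℕ) (i : ℕ) : ℝ := if i ∈ S then 1 else -1

noncomputable def pathWeight (p : ℝ) (n : ℕ) (S : Finset ℕ) : ℝ :=
  1 / 2 * ∏ i ∈ range n, if signPattern S (i + 1) = signPattern S i then p else 1 - p

lemma signPattern_eq_one_iff {S : Finset ℕ} {i : ℕ} : signPattern S i = 1 ↔ i ∈ S := by
  unfold signPattern; split_ifs with h <;> norm_num [h]

lemma signPattern_sq (S : Finset ℕ) (i : ℕ) : signPattern S i = 1 ∨ signPattern S i = -1 := by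
  unfold signPattern; split_ifs <;> simp

lemma signPattern_insert_of_ne {S : Finset ℕ} {i k : ℕ} (h : i ≠ k) :
    signPattern (insert k S) i = signPattern S i := by
  simp [signPattern, h]

lemma pathWeight_nonneg {p : ℝ} (hp0 : 0 ≤ p) (hp1 : p ≤ 1) (n : ℕ) (S : Finset ℕ) :
    0 ≤ pathWeight p n S :=
  mul_nonneg (by norm_num) <| prod_nonneg fun _ _ => by split_ifs <;> linarith

lemma pathWeight_succ (p : ℝ) (n : ℕ) (S : Finset ℕ) :
    pathWeight p (n + 1) S =
      pathWeight p n S * if signPattern S (n + 1) = signPattern S n then p else 1 - p := by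
  rw [pathWeight, prod_range_succ, ← mul_assoc, pathWeight]

lemma pathWeight_insert (p : ℝ) (n : ℕ) (S : Finset ℕ) :
    pathWeight p n (insert (n + 1) S) = pathWeight p n S := by
  unfold pathWeight
  congr 1
  refine prod_congr rfl fun i hi => ?_
  have hi : i < n := mem_range.1 hi
  rw [signPattern_insert_of_ne (by omega), signPattern_insert_of_ne (by omega)]

/-- Summing out the last sign of a path: the Markov property `E[X_{n+2} | past] = r X_{n+1}`. -/
lemma sum_powerset_mul_signPattern_succ (p : ℝ) (n : ℕ) (g : (ℕ → ℝ) → ℝ)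
    (hg : ∀ f f' : ℕ → ℝ, (∀ i ≤ n, f i = f' i) → g f = g f') :
    ∑ S ∈ (range (n + 2)).powerset,
        g (signPattern S) * signPattern S (n + 1) * pathWeight p (n + 1) S
      = (2 * p - 1) *
        ∑ S ∈ (range (n + 1)).powerset, g (signPattern S) * signPattern S n * pathWeight p n S := by
  rw [range_add_one (n := n + 1), sum_powerset_insert (by simp), ← sum_add_distrib, mul_sum]
  refine sum_congr rfl fun S hS => ?_
  have hnS : n + 1 ∉ S := fun h => by simpa using mem_range.1 (mem_powerset.1 hS h)
  have hg' : g (signPattern (insert (n + 1) S)) = g (signPattern S) :=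
    hg _ _ fun i hi => signPattern_insert_of_ne (by omega)
  have hS₁ : signPattern S (n + 1) = -1 := by simp [signPattern, hnS]
  have hS₂ : signPattern (insert (n + 1) S) (n + 1) = 1 := by simp [signPattern]
  rw [pathWeight_succ, pathWeight_succ, pathWeight_insert, hg', hS₁, hS₂,
    signPattern_insert_of_ne (by omega)]
  rcases signPattern_sq S n with h | h <;> rw [h] <;> norm_num <;> ring

end SignPatterns

lemma MeasureTheory.integral_sum_mul_sum {Ω : Type*} [MeasurableSpace Ω] {μ : Measure Ω}
    {Y : ℕ → Ω → ℝ} (hY : ∀ k l, Integrable (fun ω => Y k ω * Y l ω) μ) (b c : ℕ → ℝ)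
    (F G : Finset ℕ) :
    ∫ ω, (∑ k ∈ F, b k * Y k ω) * (∑ l ∈ G, c l * Y l ω) ∂μ
      = ∑ k ∈ F, ∑ l ∈ G, b k * c l * ∫ ω, Y k ω * Y l ω ∂μ := by
  have hterm : ∀ k l,
      (fun ω => b k * Y k ω * (c l * Y l ω)) = fun ω => b k * c l * (Y k ω * Y l ω) :=
    fun k l => funext fun ω => by ring
  have hint : ∀ k l, Integrable (fun ω => b k * Y k ω * (c l * Y l ω)) μ :=
    fun k l => hterm k l ▸ (hY k l).const_mul _
  simp_rw [Finset.sum_mul_sum]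
  rw [integral_finsetSum _ fun k _ => integrable_finsetSum _ fun l _ => hint k l]
  refine Finset.sum_congr rfl fun k _ => ?_
  rw [integral_finsetSum _ fun l _ => hint k l]
  exact Finset.sum_congr rfl fun l _ => by rw [hterm, integral_const_mul]

/-- The covariance of `∑_{k ∈ F} a_k Z_k` and `∑_{l ∈ G} a_l Z_l` for a sequence with
correlations `E[Z_k Z_l] = r ^ |k - l|`. -/
def geomCov (r : ℝ) (a : ℕ → ℝ) (F G : Finset ℕ) : ℝ :=
  ∑ k ∈ F, ∑ l ∈ G, a k * a l * r ^ Nat.dist k l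

namespace IsERWChain

variable {Ω : Type*} [MeasurableSpace Ω] {P : Measure Ω} {p : ℝ} {X : ℕ → Ω → ℝ}

lemma measurableSet_cylinder (hX : IsERWChain P p X) (n : ℕ) (ε : ℕ → ℝ) :
    MeasurableSet {ω | ∀ i ≤ n, X (i + 1) ω = ε i} := by
  simp only [ofPred_forall]
  exact MeasurableSet.iInter fun i => MeasurableSet.iInter fun _ =>
    hX.1 _ (measurableSet_singleton _)

lemma integral_eq_sum_powerset [IsProbabilityMeasure P] (hX : IsERWChain P p X) (hp0 : 0 ≤ p)
    (hp1 : p ≤ 1) (n : ℕ) (g : (ℕ → ℝ) → ℝ)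
    (hg : ∀ f f' : ℕ → ℝ, (∀ i ≤ n, f i = f' i) → g f = g f') :
    ∫ ω, g (fun i => X (i + 1) ω) ∂P
      = ∑ S ∈ (Finset.range (n + 1)).powerset, g (signPattern S) * pathWeight p n S := by
  classical
  let T : Ω → Finset ℕ := fun ω => (Finset.range (n + 1)).filter fun i => X (i + 1) ω = 1
  have hT : ∀ ω, ∀ i ≤ n, signPattern (T ω) i = X (i + 1) ω := by
    intro ω i hi
    rcases hX.2.1 (i + 1) ω with h | h <;> norm_num [signPattern, T, h, Nat.lt_succ_of_le hi]
  have hcyl : ∀ S ∈ (Finset.range (n + 1)).powerset,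
      {ω | ∀ i ≤ n, X (i + 1) ω = signPattern S i} = {ω | T ω = S} := by
    intro S hS
    ext ω
    refine ⟨fun hω => ?_, fun hω i hi => hω ▸ (hT ω i hi).symm⟩
    ext i
    have hS' := Finset.mem_powerset.1 hS
    simp only [T, Finset.mem_filter, Finset.mem_range]
    constructor
    · rintro ⟨hi, h1⟩
      rwa [hω i (Nat.lt_succ_iff.1 hi), signPattern_eq_one_iff] at h1
    · intro hi
      have hin := Nat.lt_succ_iff.1 (Finset.mem_range.1 (hS' hi))
      exact ⟨Nat.lt_succ_of_le hin, (hω i hin).trans (signPattern_eq_one_iff.2 hi)⟩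
  have hpt : ∀ ω, g (fun i => X (i + 1) ω) = ∑ S ∈ (Finset.range (n + 1)).powerset,
      {ω | T ω = S}.indicator (fun _ => g (signPattern S)) ω := by
    intro ω
    simp only [indicator, mem_ofPred_eq]
    rw [Finset.sum_ite_eq, if_pos (Finset.mem_powerset.2 (Finset.filter_subset _ _))]
    exact hg _ _ fun i hi => (hT ω i hi).symm
  have hmeas : ∀ S ∈ (Finset.range (n + 1)).powerset, MeasurableSet {ω | T ω = S} :=
    fun S hS => hcyl S hS ▸ hX.measurableSet_cylinder n _
  simp_rw [hpt]
  rw [integral_finsetSum _ fun S hS => (integrable_const _).indicator (hmeas S hS)]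
  refine Finset.sum_congr rfl fun S hS => ?_
  rw [integral_indicator_const _ (hmeas S hS), measureReal_def, ← hcyl S hS,
    hX.2.2 n _ (signPattern_sq S), ← pathWeight,
    ENNReal.toReal_ofReal (pathWeight_nonneg hp0 hp1 n S), smul_eq_mul, mul_comm]

lemma integral_mul_succ [IsProbabilityMeasure P] (hX : IsERWChain P p X) (hp0 : 0 ≤ p)
    (hp1 : p ≤ 1) (n : ℕ) (g : (ℕ → ℝ) → ℝ)
    (hg : ∀ f f' : ℕ → ℝ, (∀ i ≤ n, f i = f' i) → g f = g f') :
    ∫ ω, g (fun i => X (i + 1) ω) * X (n + 2) ω ∂P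
      = (2 * p - 1) * ∫ ω, g (fun i => X (i + 1) ω) * X (n + 1) ω ∂P := by
  have h₁ := hX.integral_eq_sum_powerset hp0 hp1 (n + 1) (fun f => g f * f (n + 1))
    fun f f' hf => by rw [hg f f' fun i hi => hf i (by omega), hf (n + 1) le_rfl]
  have h₂ := hX.integral_eq_sum_powerset hp0 hp1 n (fun f => g f * f n)
    fun f f' hf => by rw [hg f f' hf, hf n le_rfl]
  exact h₁.trans ((sum_powerset_mul_signPattern_succ p n g hg).trans (congrArg _ h₂.symm))

lemma integral_mul_add [IsProbabilityMeasure P] (hX : IsERWChain P p X) (hp0 : 0 ≤ p)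
    (hp1 : p ≤ 1) (m d : ℕ) :
    ∫ ω, X (m + 1) ω * X (m + 1 + d) ω ∂P = (2 * p - 1) ^ d := by
  induction d with
  | zero =>
    have hsq : ∀ ω, X (m + 1) ω * X (m + 1 + 0) ω = 1 := fun ω => by
      rcases hX.2.1 (m + 1) ω with h | h <;> simp [h]
    simp [hsq]
  | succ d ih =>
    have := hX.integral_mul_succ hp0 hp1 (m + d) (fun f => f m) fun f f' hf => hf m (by omega)
    rw [show m + 1 + (d + 1) = m + d + 2 by omega, this, show m + d + 1 = m + 1 + d by omega, ih,
      pow_succ']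

lemma integral_mul [IsProbabilityMeasure P] (hX : IsERWChain P p X) (hp0 : 0 ≤ p)
    (hp1 : p ≤ 1) {k l : ℕ} (hk : 1 ≤ k) (hl : 1 ≤ l) :
    ∫ ω, X k ω * X l ω ∂P = (2 * p - 1) ^ Nat.dist k l := by
  wlog hkl : k ≤ l generalizing k l
  · simp_rw [mul_comm (X k _), Nat.dist_comm k]
    exact this hl hk (le_of_not_ge hkl)
  obtain ⟨m, rfl⟩ : ∃ m, k = m + 1 := ⟨k - 1, by omega⟩
  obtain ⟨d, rfl⟩ : ∃ d, l = m + 1 + d := ⟨l - (m + 1), by omega⟩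
  rw [hX.integral_mul_add hp0 hp1, Nat.dist_eq_sub_of_le hkl, Nat.add_sub_cancel_left]

lemma integrable_mul [IsFiniteMeasure P] (hX : IsERWChain P p X) (k l : ℕ) :
    Integrable (fun ω => X k ω * X l ω) P := by
  refine (integrable_const (1 : ℝ)).mono' ((hX.1 k).mul (hX.1 l)).aestronglyMeasurable
    (ae_of_all _ fun ω => ?_)
  rcases hX.2.1 k ω with h | h <;> rcases hX.2.1 l ω with h' | h' <;> simp [h, h']

lemma integral_sum_mul_sum [IsProbabilityMeasure P] (hX : IsERWChain P p X) (hp0 : 0 ≤ p)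
    (hp1 : p ≤ 1) (a : ℕ → ℝ) {F G : Finset ℕ} (hF : ∀ k ∈ F, 1 ≤ k) (hG : ∀ l ∈ G, 1 ≤ l) :
    ∫ ω, (∑ k ∈ F, a k * X k ω) * (∑ l ∈ G, a l * X l ω) ∂P = geomCov (2 * p - 1) a F G := by
  rw [MeasureTheory.integral_sum_mul_sum hX.integrable_mul]
  exact Finset.sum_congr rfl fun k hk => Finset.sum_congr rfl fun l hl => by
    rw [hX.integral_mul hp0 hp1 (hF k hk) (hG l hl)]

lemma sn2_eq_geomCov [IsProbabilityMeasure P] (hX : IsERWChain P p X) (hp0 : 0 ≤ p)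
    (hp1 : p ≤ 1) (a : ℕ → ℝ) (n : ℕ) :
    sn2 P a X n = geomCov (2 * p - 1) a (Finset.Icc 1 n) (Finset.Icc 1 n) := by
  rw [← hX.integral_sum_mul_sum hp0 hp1 a (fun k hk => (Finset.mem_Icc.1 hk).1)
    fun l hl => (Finset.mem_Icc.1 hl).1]
  simp [sn2, Swalk, sq]

lemma blockVar_eq_geomCov [IsProbabilityMeasure P] (hX : IsERWChain P p X) (hp0 : 0 ≤ p)
    (hp1 : p ≤ 1) (a : ℕ → ℝ) (h : ℕ → ℕ) (j : ℕ) :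
    blockVar P a X h j = geomCov (2 * p - 1) a (Finset.Icc (h j + 1) (h (j + 1)))
      (Finset.Icc (h j + 1) (h (j + 1))) := by
  rw [← hX.integral_sum_mul_sum hp0 hp1 a (fun k hk => by linarith [(Finset.mem_Icc.1 hk).1])
    fun l hl => by linarith [(Finset.mem_Icc.1 hl).1]]
  simp [blockVar, blockY, sq]

end IsERWChain

namespace geomCov

open Finset

lemma comm (r : ℝ) (a : ℕ → ℝ) (F G : Finset ℕ) : geomCov r a F G = geomCov r a G F := by
  rw [geomCov, sum_comm]
  exact sum_congr rfl fun l _ => sum_congr rfl fun k _ => by rw [Nat.dist_comm, mul_comm (a k)]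

lemma union_left (r : ℝ) (a : ℕ → ℝ) {U V : Finset ℕ} (hUV : Disjoint U V) (G : Finset ℕ) :
    geomCov r a (U ∪ V) G = geomCov r a U G + geomCov r a V G :=
  sum_union hUV

lemma union_union (r : ℝ) (a : ℕ → ℝ) {U V : Finset ℕ} (hUV : Disjoint U V) :
    geomCov r a (U ∪ V) (U ∪ V) = geomCov r a U U + geomCov r a V V + 2 * geomCov r a U V := by
  rw [union_left r a hUV, comm r a U, comm r a V, union_left r a hUV, union_left r a hUV,
    comm r a V U]
  ring

lemma range_succ (r : ℝ) (b : ℕ → ℝ) (n : ℕ) :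
    geomCov r b (range (n + 1)) (range (n + 1)) =
      geomCov r (fun i => b (i + 1)) (range n) (range n) + b 0 ^ 2
        + 2 * b 0 * r * ∑ i ∈ range n, b (i + 1) * r ^ i := by
  simp only [geomCov, sum_range_succ', Nat.dist_add_add_right, Nat.dist_zero_left,
    Nat.dist_zero_right, sum_add_distrib, mul_sum]
  have hcross : ∑ i ∈ range n, 2 * b 0 * r * (b (i + 1) * r ^ i) =
      ∑ i ∈ range n, b 0 * b (i + 1) * r ^ (i + 1) +
        ∑ i ∈ range n, b (i + 1) * b 0 * r ^ (i + 1) := by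
    rw [← sum_add_distrib]
    exact sum_congr rfl fun i _ => by ring
  rw [hcross]
  ring

/-- The induction carries the square of `c = ∑ b_i r^i`: if `c'` is the same sum for the shifted
sequence, then `b₀ = c - r c'`. -/
lemma sq_sum_range_le (r : ℝ) (hr : r ^ 2 ≤ 1) (b : ℕ → ℝ) (n : ℕ) :
    (1 - r ^ 2) * ∑ i ∈ range n, b i ^ 2 + (1 + r ^ 2) ^ 2 * (∑ i ∈ range n, b i * r ^ i) ^ 2 ≤
      2 * (1 + r ^ 2) * geomCov r b (range n) (range n) := by
  induction n generalizing b with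
  | zero => simp [geomCov]
  | succ n ih =>
    have ih' := ih fun i => b (i + 1)
    set c' := ∑ i ∈ range n, b (i + 1) * r ^ i
    have hc : ∑ i ∈ range (n + 1), b i * r ^ i = b 0 + r * c' := by
      rw [sum_range_succ', mul_sum]
      simp only [pow_succ, pow_zero, mul_one]
      rw [add_comm]
      exact congrArg _ (sum_congr rfl fun i _ => by ring)
    rw [range_succ, hc, sum_range_succ']
    nlinarith [sq_nonneg (r * (b 0 + r * c') + c'), mul_nonneg (sub_nonneg.2 hr)
      (sq_nonneg (r * (b 0 + r * c') + c'))]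

lemma Icc_self_eq_range (r : ℝ) (a : ℕ → ℝ) (m n : ℕ) :
    geomCov r a (Icc m n) (Icc m n) =
      geomCov r (fun i => a (m + i)) (range (n + 1 - m)) (range (n + 1 - m)) := by
  simp only [geomCov, ← Finset.Ico_add_one_right_eq_Icc, sum_Ico_eq_sum_range,
    Nat.dist_add_add_left]

lemma sq_sum_Icc_le (r : ℝ) (hr : r ^ 2 ≤ 1) (a : ℕ → ℝ) (m n : ℕ) :
    (1 - r ^ 2) * ∑ k ∈ Icc m n, a k ^ 2 ≤ 2 * (1 + r ^ 2) * geomCov r a (Icc m n) (Icc m n) := by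
  have h := sq_sum_range_le r hr (fun i => a (m + i)) (n + 1 - m)
  rw [Icc_self_eq_range, ← Finset.Ico_add_one_right_eq_Icc, sum_Ico_eq_sum_range]
  nlinarith [sq_nonneg (∑ i ∈ range (n + 1 - m), a (m + i) * r ^ i)]

end geomCov

lemma Finset.sum_pow_le_of_injOn {x : ℝ} (hx0 : 0 ≤ x) (hx1 : x < 1) {F : Finset ℕ} {e : ℕ → ℕ}
    (he : Set.InjOn e F) : ∑ k ∈ F, x ^ e k ≤ (1 - x)⁻¹ := by
  rw [← Finset.sum_image he, ← tsum_geometric_of_lt_one hx0 hx1]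
  exact (summable_geometric_of_lt_one hx0 hx1).sum_le_tsum _ fun i _ => pow_nonneg hx0 i

/-- The correlation between the past `(0, u]` and the block `(u, v]` only involves the terms
near `u`, so it is bounded by a single `a_k²` rather than by the block length. -/
lemma geomCov.abs_Icc_le {r : ℝ} (hr : |r| < 1) (a : ℕ → ℝ) {D : ℝ} (hD0 : 0 ≤ D) (u v : ℕ)
    (hD : ∀ k ∈ Finset.Icc 1 v, a k ^ 2 ≤ D) :
    |geomCov r a (Finset.Icc 1 u) (Finset.Icc (u + 1) v)| ≤ D * ((1 - |r|)⁻¹ * (1 - |r|)⁻¹) := by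
  have hterm : ∀ k ∈ Finset.Icc 1 u, ∀ l ∈ Finset.Icc (u + 1) v,
      |a k * a l * r ^ Nat.dist k l| ≤ D * (|r| ^ (u + 1 - k) * |r| ^ (l - (u + 1))) := by
    intro k hk l hl
    rw [Finset.mem_Icc] at hk hl
    rw [abs_mul, abs_pow, ← pow_add, Nat.dist_eq_sub_of_le (by omega),
      show u + 1 - k + (l - (u + 1)) = l - k by omega]
    refine mul_le_mul_of_nonneg_right ?_ (pow_nonneg (abs_nonneg r) _)
    have hk' := hD k (Finset.mem_Icc.2 ⟨hk.1, by omega⟩)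
    have hl' := hD l (Finset.mem_Icc.2 ⟨by omega, hl.2⟩)
    rw [abs_mul]
    nlinarith [two_mul_le_add_sq |a k| |a l|, sq_abs (a k), sq_abs (a l)]
  have hx0 := abs_nonneg r
  calc |geomCov r a (Finset.Icc 1 u) (Finset.Icc (u + 1) v)|
      ≤ ∑ k ∈ Finset.Icc 1 u, ∑ l ∈ Finset.Icc (u + 1) v, |a k * a l * r ^ Nat.dist k l| :=
        (Finset.abs_sum_le_sum_abs _ _).trans (Finset.sum_le_sum fun k _ =>
          Finset.abs_sum_le_sum_abs _ _)
    _ ≤ ∑ k ∈ Finset.Icc 1 u, ∑ l ∈ Finset.Icc (u + 1) v,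
          D * (|r| ^ (u + 1 - k) * |r| ^ (l - (u + 1))) :=
        Finset.sum_le_sum fun k hk => Finset.sum_le_sum fun l hl => hterm k hk l hl
    _ = D * ((∑ k ∈ Finset.Icc 1 u, |r| ^ (u + 1 - k)) *
          ∑ l ∈ Finset.Icc (u + 1) v, |r| ^ (l - (u + 1))) := by
        rw [Finset.sum_mul_sum, Finset.mul_sum]
        simp_rw [Finset.mul_sum]
    _ ≤ D * ((1 - |r|)⁻¹ * (1 - |r|)⁻¹) := by
        gcongr <;> exact Finset.sum_pow_le_of_injOn hx0 hr fun k hk l hl hkl => by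
          simp only [Finset.coe_Icc, Set.mem_Icc] at hk hl
          omega

lemma isLittleO_rpow_rpow_atTop {s t : ℝ} (hst : s < t) :
    (fun x : ℝ => x ^ s) =o[atTop] fun x => x ^ t := by
  refine (isLittleO_iff_tendsto' ?_).2 ?_
  · filter_upwards [eventually_gt_atTop 0] with x hx h0
    exact absurd h0 (Real.rpow_pos_of_pos hx t).ne'
  · refine (tendsto_rpow_neg_atTop (sub_pos.2 hst)).congr' ?_
    filter_upwards [eventually_gt_atTop 0] with x hx
    rw [← Real.rpow_sub hx, neg_sub]

lemma Asymptotics.IsBigO.exists_forall_le_add_one {f g : ℕ → ℝ} (hg : ∀ n, 0 ≤ g n)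
    (hfg : f =O[atTop] g) : ∃ K, 0 < K ∧ ∀ n, ‖f n‖ ≤ K * (g n + 1) := by
  have hfg' : f =O[cofinite] fun n => g n + 1 := by
    rw [Nat.cofinite_eq_atTop]
    refine hfg.trans (IsBigO.of_bound 1 (Eventually.of_forall fun n => ?_))
    rw [Real.norm_of_nonneg (hg n), Real.norm_of_nonneg (by linarith [hg n])]
    linarith
  obtain ⟨K, hK, hbound⟩ := bound_of_isBigO_cofinite hfg'
  refine ⟨K, hK, fun n => ?_⟩
  have := hbound (by linarith [hg n] : g n + 1 ≠ 0)
  rwa [Real.norm_of_nonneg (by linarith [hg n] : 0 ≤ g n + 1)] at this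

/-- Each step multiplies `b` by at least `1 + b_n^{-θ}`, so `log b` grows by a fixed fraction
of `b_n^{-θ}`. -/
lemma nat_le_two_mul_rpow_mul_log {b : ℕ → ℝ} {θ : ℝ} (hθ : 0 ≤ θ) (hb0 : 1 ≤ b 0)
    (hgap : ∀ n, b n ^ (1 - θ) ≤ b (n + 1) - b n) (n : ℕ) :
    (n : ℝ) ≤ 2 * b n ^ θ * Real.log (b n) := by
  have hb1 : ∀ n, 1 ≤ b n := fun n => by
    induction n with
    | zero => exact hb0
    | succ n ih => linarith [hgap n, Real.rpow_nonneg (zero_le_one.trans ih) (1 - θ)]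
  induction n with
  | zero => simpa using mul_nonneg (mul_nonneg zero_le_two
      (Real.rpow_nonneg (zero_le_one.trans hb0) θ)) (Real.log_nonneg hb0)
  | succ n ih =>
    have hpos : 0 < b n := zero_lt_one.trans_le (hb1 n)
    set y := b n ^ (-θ)
    have hy0 : 0 ≤ y := Real.rpow_nonneg hpos.le _
    have hy1 : y ≤ 1 := Real.rpow_le_one_of_one_le_of_nonpos (hb1 n) (by linarith)
    have hyθ : b n ^ θ * y = 1 := by rw [← Real.rpow_add hpos]; simp
    have hstep : b n * (1 + y) ≤ b (n + 1) := by
      have := hgap n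
      rw [sub_eq_add_neg, Real.rpow_add hpos, Real.rpow_one] at this
      linarith
    have hlog : Real.log (b n) + 2 * y / (y + 2) ≤ Real.log (b (n + 1)) :=
      calc Real.log (b n) + 2 * y / (y + 2) ≤ Real.log (b n) + Real.log (1 + y) := by
            linarith [Real.le_log_one_add_of_nonneg hy0]
        _ = Real.log (b n * (1 + y)) := (Real.log_mul hpos.ne' (by positivity)).symm
        _ ≤ Real.log (b (n + 1)) := Real.log_le_log (by positivity) hstep
    have hgain : 1 ≤ 2 * b n ^ θ * (2 * y / (y + 2)) := by
      rw [mul_div_assoc', le_div_iff₀ (by positivity)]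
      nlinarith
    have hmono : b n ^ θ ≤ b (n + 1) ^ θ :=
      Real.rpow_le_rpow hpos.le (by nlinarith) hθ
    have hlog0 : 0 ≤ Real.log (b (n + 1)) := Real.log_nonneg (hb1 (n + 1))
    push_cast
    nlinarith [mul_le_mul_of_nonneg_right hmono hlog0, Real.rpow_nonneg hpos.le θ]

section Asum

variable (a : ℕ → ℝ)

lemma Asum_nonneg (n : ℕ) : 0 ≤ Asum a n :=
  Finset.sum_nonneg fun _ _ => sq_nonneg _

lemma Asum_succ (n : ℕ) : Asum a (n + 1) = Asum a n + a (n + 1) ^ 2 :=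
  Finset.sum_Icc_succ_top (by omega) _

lemma Asum_mono : Monotone (Asum a) :=
  monotone_nat_of_le_succ fun n => by rw [Asum_succ]; linarith [sq_nonneg (a (n + 1))]

lemma Icc_one_union_Icc {u v : ℕ} (huv : u ≤ v) :
    Finset.Icc 1 u ∪ Finset.Icc (u + 1) v = Finset.Icc 1 v := by
  ext k; simp only [Finset.mem_union, Finset.mem_Icc]; omega

lemma disjoint_Icc_one_Icc (u v : ℕ) : Disjoint (Finset.Icc 1 u) (Finset.Icc (u + 1) v) :=
  Finset.disjoint_left.2 fun k hk hk' => by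
    rw [Finset.mem_Icc] at hk hk'; omega

lemma Asum_sub {u v : ℕ} (huv : u ≤ v) :
    Asum a v - Asum a u = ∑ k ∈ Finset.Icc (u + 1) v, a k ^ 2 := by
  rw [Asum, Asum, ← Icc_one_union_Icc huv, Finset.sum_union (disjoint_Icc_one_Icc u v)]
  ring

end Asum

lemma eventually_sq_le_half_Asum {a : ℕ → ℝ} {δ : ℝ} (hδ : 0 < δ)
    (hA1 : Tendsto (Asum a) atTop atTop)
    (hA2 : (fun n => a n ^ 2) =O[atTop] fun n => Asum a n ^ (1 - δ)) :
    ∀ᶠ n in atTop, a n ^ 2 ≤ Asum a n / 2 := by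
  have := hA2.trans_isLittleO
    ((isLittleO_rpow_rpow_atTop (by linarith : 1 - δ < 1)).comp_tendsto hA1)
  filter_upwards [this.def (by norm_num : (0 : ℝ) < 1 / 2)] with n hn
  simp only [Function.comp_apply, Real.rpow_one, Real.norm_of_nonneg (sq_nonneg _),
    Real.norm_of_nonneg (Asum_nonneg a n)] at hn
  linarith

lemma geomCov.abs_Icc_le_Asum {r : ℝ} (hr : |r| < 1) {a : ℕ → ℝ} {K γ : ℝ} (hK : 0 ≤ K)
    (hγ : 0 ≤ γ) (ha : ∀ n, a n ^ 2 ≤ K * (Asum a n ^ γ + 1)) (u v : ℕ) :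
    |geomCov r a (Finset.Icc 1 u) (Finset.Icc (u + 1) v)| ≤
      K * (Asum a v ^ γ + 1) * ((1 - |r|)⁻¹ * (1 - |r|)⁻¹) :=
  geomCov.abs_Icc_le hr a
    (mul_nonneg hK (add_nonneg (Real.rpow_nonneg (Asum_nonneg a v) γ) zero_le_one)) u v
    fun k hk => (ha k).trans <| by
      gcongr; exacts [Asum_nonneg a k, Asum_mono a (Finset.mem_Icc.1 hk).2]

namespace IsBlocking

variable {a : ℕ → ℝ} {δ : ℝ} {h : ℕ → ℕ}

lemma lt_succ (hb : IsBlocking a δ h) {n : ℕ} (hn : 1 ≤ n) : h n < h (n + 1) :=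
  (hb.2 n hn).1.1

lemma rpow_le_sub (hb : IsBlocking a δ h) {n : ℕ} (hn : 1 ≤ n) :
    Asum a (h n) ^ (1 - δ / 2) ≤ Asum a (h (n + 1)) - Asum a (h n) :=
  (hb.2 n hn).1.2

lemma Asum_pred_le (hb : IsBlocking a δ h) {n : ℕ} (hn : 1 ≤ n) :
    Asum a (h (n + 1) - 1) ≤ Asum a (h n) + Asum a (h n) ^ (1 - δ / 2) := by
  rcases (Nat.le_sub_one_of_lt (hb.lt_succ hn)).eq_or_lt with heq | hlt
  · rw [← heq]
    linarith [Real.rpow_nonneg (Asum_nonneg a (h n)) (1 - δ / 2)]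
  · by_contra hcon
    have := (hb.2 n hn).2 ⟨hlt, by linarith⟩
    omega

lemma sub_one_le (hb : IsBlocking a δ h) (j : ℕ) : j - 1 ≤ h j := by
  induction j with
  | zero => omega
  | succ j ih =>
    rcases Nat.eq_zero_or_pos j with rfl | hj
    · simp
    · have := hb.lt_succ hj; omega

lemma le_of_le (hb : IsBlocking a δ h) {m n : ℕ} (hm : 1 ≤ m) (hmn : m ≤ n) : h m ≤ h n := by
  induction n, hmn using Nat.le_induction with
  | base => rfl
  | succ n hmn ih => exact ih.trans (hb.lt_succ (hm.trans hmn)).le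

lemma tendsto_atTop (hb : IsBlocking a δ h) : Tendsto h atTop atTop :=
  tendsto_atTop_mono hb.sub_one_le (tendsto_sub_atTop_nat 1)

lemma tendsto_Asum (hb : IsBlocking a δ h) (hA : Tendsto (Asum a) atTop atTop) :
    Tendsto (fun j => Asum a (h j)) atTop atTop :=
  hA.comp hb.tendsto_atTop

/-- By minimality of `h (j + 1)`, the block `B_{j+1} - B_j` exceeds `B_j^{1-δ/2}` by a single
step `a²_{h (j+1)}`, which is eventually at most `B_{j+1} / 2`. -/
lemma eventually_le_four_mul (hb : IsBlocking a δ h) (hδ : 0 ≤ δ)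
    (hA : Tendsto (Asum a) atTop atTop) (hsmall : ∀ᶠ n in atTop, a n ^ 2 ≤ Asum a n / 2) :
    ∀ᶠ j in atTop, Asum a (h (j + 1)) ≤ 4 * Asum a (h j) := by
  filter_upwards [eventually_ge_atTop 1,
    (hb.tendsto_atTop.comp (tendsto_add_atTop_nat 1)).eventually hsmall,
    (hb.tendsto_Asum hA).eventually_ge_atTop 1] with j hj hsmall hB
  obtain ⟨m, hm⟩ : ∃ m, h (j + 1) = m + 1 := ⟨h (j + 1) - 1, by have := hb.lt_succ hj; omega⟩
  have hpred := hb.Asum_pred_le hj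
  have hrpow : Asum a (h j) ^ (1 - δ / 2) ≤ Asum a (h j) :=
    Real.rpow_le_self_of_one_le hB (by linarith)
  simp only [Function.comp_apply, hm, Nat.add_sub_cancel, Asum_succ] at hsmall hpred ⊢
  linarith

lemma exists_abs_geomCov_le {r : ℝ} (hr : |r| < 1) (hb : IsBlocking a δ h) (hδ0 : 0 < δ)
    (hδ1 : δ ≤ 1) (hA1 : Tendsto (Asum a) atTop atTop)
    (hA2 : (fun n => a n ^ 2) =O[atTop] fun n => Asum a n ^ (1 - δ)) :
    ∃ C, 0 ≤ C ∧ ∀ᶠ M in atTop, ∀ j ∈ Finset.Icc 1 M,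
      |geomCov r a (Finset.Icc 1 (h j)) (Finset.Icc (h j + 1) (h (j + 1)))| ≤
        C * Asum a (h M) ^ (1 - δ) := by
  obtain ⟨K, hK, ha⟩ :=
    hA2.exists_forall_le_add_one fun n => Real.rpow_nonneg (Asum_nonneg a n) _
  simp only [Real.norm_of_nonneg (sq_nonneg _)] at ha
  refine ⟨K * 5 * ((1 - |r|)⁻¹ * (1 - |r|)⁻¹), by positivity, ?_⟩
  filter_upwards [hb.eventually_le_four_mul hδ0.le hA1 (eventually_sq_le_half_Asum hδ0 hA1 hA2),
    (hb.tendsto_Asum hA1).eventually_ge_atTop 1] with M hgrowth hB j hj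
  rw [Finset.mem_Icc] at hj
  have hpow : Asum a (h (M + 1)) ^ (1 - δ) + 1 ≤ 5 * Asum a (h M) ^ (1 - δ) := by
    have h4 : (4 : ℝ) ^ (1 - δ) ≤ 4 := Real.rpow_le_self_of_one_le (by norm_num) (by linarith)
    have h1 : 1 ≤ Asum a (h M) ^ (1 - δ) := Real.one_le_rpow hB (by linarith)
    calc Asum a (h (M + 1)) ^ (1 - δ) + 1 ≤ (4 * Asum a (h M)) ^ (1 - δ) + 1 := by
          gcongr; exact Asum_nonneg a _
      _ = 4 ^ (1 - δ) * Asum a (h M) ^ (1 - δ) + 1 := by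
          rw [Real.mul_rpow (by norm_num) (Asum_nonneg a _)]
      _ ≤ 5 * Asum a (h M) ^ (1 - δ) := by nlinarith
  calc |geomCov r a (Finset.Icc 1 (h j)) (Finset.Icc (h j + 1) (h (j + 1)))|
      ≤ K * (Asum a (h (j + 1)) ^ (1 - δ) + 1) * ((1 - |r|)⁻¹ * (1 - |r|)⁻¹) :=
        geomCov.abs_Icc_le_Asum hr hK.le (by linarith) ha _ _
    _ ≤ K * (Asum a (h (M + 1)) ^ (1 - δ) + 1) * ((1 - |r|)⁻¹ * (1 - |r|)⁻¹) := by
        gcongr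
        exacts [Asum_nonneg a _, Asum_mono a (hb.le_of_le (by omega) (by omega))]
    _ ≤ K * (5 * Asum a (h M) ^ (1 - δ)) * ((1 - |r|)⁻¹ * (1 - |r|)⁻¹) := by gcongr
    _ = K * 5 * ((1 - |r|)⁻¹ * (1 - |r|)⁻¹) * Asum a (h M) ^ (1 - δ) := by ring

lemma eventually_nat_le (hb : IsBlocking a δ h) (hδ : 0 ≤ δ)
    (hA : Tendsto (Asum a) atTop atTop) :
    ∀ᶠ M : ℕ in atTop, (M : ℝ) ≤ 3 * Asum a (h M) ^ (δ / 2) * Real.log (Asum a (h M)) := by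
  obtain ⟨J, hJ1, hBJ⟩ :=
    ((eventually_ge_atTop 1).and ((hb.tendsto_Asum hA).eventually_ge_atTop 1)).exists
  have hcount := nat_le_two_mul_rpow_mul_log (b := fun n => Asum a (h (J + n))) (θ := δ / 2)
    (by linarith) (by simpa using hBJ) fun n => by
      simpa [sub_eq_add_neg, add_assoc] using hb.rpow_le_sub (n := J + n) (by omega)
  filter_upwards [eventually_ge_atTop J, (hb.tendsto_Asum hA).eventually_ge_atTop (Real.exp J)]
    with M hM hBM
  have hpos : 0 < Asum a (h M) := (Real.exp_pos _).trans_le hBM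
  have hJlog : (J : ℝ) ≤ Real.log (Asum a (h M)) := (Real.le_log_iff_exp_le hpos).2 hBM
  have hrpow : 1 ≤ Asum a (h M) ^ (δ / 2) :=
    Real.one_le_rpow ((Real.one_le_exp (Nat.cast_nonneg J)).trans hBM) (by linarith)
  have := hcount (M - J)
  simp only [Nat.add_sub_cancel' hM, Nat.cast_sub hM] at this
  nlinarith [Real.log_nonneg ((Real.one_le_exp (Nat.cast_nonneg J)).trans hBM)]

end IsBlocking

section Asymptotics

variable {s v c B : ℕ → ℝ} {δ C : ℝ}

lemma ratio_sub_one_isBigO {κ : ℝ} (hδ : 0 ≤ δ) (hκ : 0 < κ) (hC : 0 ≤ C)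
    (hB : Tendsto B atTop atTop) (hs : ∀ᶠ j in atTop, s (j + 1) = s j + v j + 2 * c j)
    (hv : ∀ᶠ j in atTop, κ * B j ^ (1 - δ / 2) ≤ v j)
    (hc : ∀ᶠ j in atTop, |c j| ≤ C * B j ^ (1 - δ)) :
    (fun j => (s (j + 1) - s j) / v j - 1) =O[atTop]
      fun j => B j ^ (-δ / 4) * Real.sqrt (Real.log (B j)) := by
  refine IsBigO.of_bound (2 * C / κ) ?_
  filter_upwards [hs, hv, hc, hB.eventually_ge_atTop (Real.exp 1)] with j hs hv hc hBe
  have hB1 : 1 ≤ B j := (Real.one_lt_exp_iff.2 one_pos).le.trans hBe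
  have hBpos : 0 < B j := zero_lt_one.trans_le hB1
  have hvpos : 0 < v j := (mul_pos hκ (Real.rpow_pos_of_pos hBpos _)).trans_le hv
  have hsqrt : 1 ≤ Real.sqrt (Real.log (B j)) :=
    Real.one_le_sqrt.2 ((Real.le_log_iff_exp_le hBpos).2 hBe)
  have hexp : B j ^ (1 - δ) = B j ^ (1 - δ / 2) * (B j ^ (-δ / 4) * B j ^ (-δ / 4)) := by
    rw [← Real.rpow_add hBpos, ← Real.rpow_add hBpos]; ring_nf
  have hquarter : B j ^ (-δ / 4) ≤ 1 := Real.rpow_le_one_of_one_le_of_nonpos hB1 (by linarith)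
  rw [hs, show (s j + v j + 2 * c j - s j) / v j - 1 = 2 * c j / v j by field_simp; ring,
    Real.norm_eq_abs, Real.norm_eq_abs, abs_div, abs_of_pos hvpos, abs_mul, abs_two,
    abs_of_nonneg (mul_nonneg (Real.rpow_nonneg hBpos.le _) (Real.sqrt_nonneg _)),
    div_le_iff₀ hvpos]
  have hq0 : 0 ≤ B j ^ (-δ / 4) := Real.rpow_nonneg hBpos.le _
  calc 2 * |c j| ≤ 2 * (C * B j ^ (1 - δ)) := by gcongr
    _ = 2 * C / κ * B j ^ (-δ / 4) * (κ * B j ^ (1 - δ / 2)) * B j ^ (-δ / 4) := by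
        rw [hexp]; field_simp
    _ ≤ 2 * C / κ * B j ^ (-δ / 4) * v j * Real.sqrt (Real.log (B j)) := by
        gcongr; exact hquarter.trans hsqrt
    _ = 2 * C / κ * (B j ^ (-δ / 4) * Real.sqrt (Real.log (B j))) * v j := by ring

lemma sub_sum_eq_sum (hs1 : s 1 = 0) (hs : ∀ j, 1 ≤ j → s (j + 1) = s j + v j + 2 * c j)
    (M : ℕ) : s (M + 1) - ∑ j ∈ Finset.Icc 1 M, v j = ∑ j ∈ Finset.Icc 1 M, 2 * c j := by
  induction M with
  | zero => simp [hs1]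
  | succ M ih =>
    rw [Finset.sum_Icc_succ_top (by omega), Finset.sum_Icc_succ_top (by omega),
      hs (M + 1) (by omega)]
    linarith

lemma sub_sum_isBigO {C' : ℝ} (hδ : 0 < δ) (hC : 0 ≤ C) (hC' : 0 ≤ C')
    (hB : Tendsto B atTop atTop) (hs1 : s 1 = 0)
    (hs : ∀ j, 1 ≤ j → s (j + 1) = s j + v j + 2 * c j)
    (hc : ∀ᶠ M in atTop, ∀ j ∈ Finset.Icc 1 M, |c j| ≤ C * B M ^ (1 - δ))
    (hcount : ∀ᶠ M : ℕ in atTop, (M : ℝ) ≤ C' * B M ^ (δ / 2) * Real.log (B M)) :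
    (fun M => s (M + 1) - ∑ j ∈ Finset.Icc 1 M, v j) =O[atTop]
      fun M => B M ^ (1 - δ / 8) * Real.sqrt (Real.log (B M)) := by
  refine IsBigO.of_bound (2 * C * C' * (8 / (3 * δ))) ?_
  filter_upwards [hc, hcount, hB.eventually_ge_atTop (Real.exp 1)] with M hc hcount hBe
  have hBpos : 0 < B M := (Real.exp_pos 1).trans_le hBe
  have hsqrt : 1 ≤ Real.sqrt (Real.log (B M)) :=
    Real.one_le_sqrt.2 ((Real.le_log_iff_exp_le hBpos).2 hBe)
  have hlog : Real.log (B M) ≤ B M ^ (3 * δ / 8) / (3 * δ / 8) :=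
    Real.log_le_rpow_div hBpos.le (by positivity)
  have hexp : B M ^ (δ / 2) * B M ^ (1 - δ) = B M ^ (1 - δ / 2) := by
    rw [← Real.rpow_add hBpos]; ring_nf
  have hexp' : B M ^ (3 * δ / 8) * B M ^ (1 - δ / 2) = B M ^ (1 - δ / 8) := by
    rw [← Real.rpow_add hBpos]; ring_nf
  have hrpow : ∀ t : ℝ, 0 ≤ B M ^ t := fun t => Real.rpow_nonneg hBpos.le t
  rw [sub_sum_eq_sum hs1 hs, Real.norm_eq_abs, Real.norm_eq_abs,
    abs_of_nonneg (mul_nonneg (hrpow _) (Real.sqrt_nonneg _))]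
  calc |∑ j ∈ Finset.Icc 1 M, 2 * c j|
      ≤ ∑ j ∈ Finset.Icc 1 M, 2 * (C * B M ^ (1 - δ)) :=
        (Finset.abs_sum_le_sum_abs _ _).trans <| Finset.sum_le_sum fun j hj => by
          rw [abs_mul, abs_two]; exact mul_le_mul_of_nonneg_left (hc j hj) zero_le_two
    _ = M * (2 * C * B M ^ (1 - δ)) := by
        rw [Finset.sum_const, Nat.card_Icc, nsmul_eq_mul, Nat.add_sub_cancel]; ring
    _ ≤ C' * B M ^ (δ / 2) * Real.log (B M) * (2 * C * B M ^ (1 - δ)) := by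
        gcongr
    _ = 2 * C * C' * (Real.log (B M) * B M ^ (1 - δ / 2)) := by rw [← hexp]; ring
    _ ≤ 2 * C * C' * (B M ^ (3 * δ / 8) / (3 * δ / 8) * B M ^ (1 - δ / 2)) := by
        gcongr
    _ = 2 * C * C' * (8 / (3 * δ)) * B M ^ (1 - δ / 8) := by
        rw [← hexp']; field_simp
    _ ≤ 2 * C * C' * (8 / (3 * δ)) * (B M ^ (1 - δ / 8) * Real.sqrt (Real.log (B M))) := by
        gcongr; exact le_mul_of_one_le_right (hrpow _) hsqrt

end Asymptotics

lemma sn2_zero {Ω : Type*} [MeasurableSpace Ω] (P : Measure Ω) (a : ℕ → ℝ) (X : ℕ → Ω → ℝ) :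
    sn2 P a X 0 = 0 := by
  simp [sn2, Swalk]

namespace IsERWChain

variable {Ω : Type*} [MeasurableSpace Ω] {P : Measure Ω} [IsProbabilityMeasure P] {p : ℝ}
  {X : ℕ → Ω → ℝ} {a : ℕ → ℝ} {h : ℕ → ℕ}

lemma sn2_succ_eq (hX : IsERWChain P p X) (hp0 : 0 ≤ p) (hp1 : p ≤ 1) {j : ℕ}
    (hj : h j ≤ h (j + 1)) :
    sn2 P a X (h (j + 1)) = sn2 P a X (h j) + blockVar P a X h j +
      2 * geomCov (2 * p - 1) a (Finset.Icc 1 (h j)) (Finset.Icc (h j + 1) (h (j + 1))) := by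
  rw [hX.sn2_eq_geomCov hp0 hp1, hX.sn2_eq_geomCov hp0 hp1, hX.blockVar_eq_geomCov hp0 hp1,
    ← Icc_one_union_Icc hj, geomCov.union_union _ _ (disjoint_Icc_one_Icc _ _)]

lemma mul_rpow_le_blockVar (hX : IsERWChain P p X) (hp0 : 0 ≤ p) (hp1 : p ≤ 1) {δ : ℝ}
    (hb : IsBlocking a δ h) {j : ℕ} (hj : 1 ≤ j) :
    (1 - (2 * p - 1) ^ 2) / (2 * (1 + (2 * p - 1) ^ 2)) * Asum a (h j) ^ (1 - δ / 2) ≤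
      blockVar P a X h j := by
  set r := 2 * p - 1
  have hr : r ^ 2 ≤ 1 := by nlinarith
  have hsum := geomCov.sq_sum_Icc_le r hr a (h j + 1) (h (j + 1))
  rw [← Asum_sub a (hb.lt_succ hj).le] at hsum
  rw [hX.blockVar_eq_geomCov hp0 hp1, div_mul_eq_mul_div, div_le_iff₀ (by positivity)]
  nlinarith [hb.rpow_le_sub hj]

end IsERWChain

theorem stmt16_general {Ω : Type*} [MeasurableSpace Ω] (P : Measure Ω) [IsProbabilityMeasure P]
    (p : ℝ) (hp : p ∈ Set.Ioo (0:ℝ) 1)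
    (X : ℕ → Ω → ℝ) (hX : IsERWChain P p X)
    (a : ℕ → ℝ) (δ : ℝ) (hδ : δ ∈ Set.Ioc (0:ℝ) 1)
    (hA1 : Tendsto (Asum a) atTop atTop)
    (hA2 : (fun n => (a n) ^ 2) =O[atTop] fun n => Asum a n ^ (1 - δ))
    (h : ℕ → ℕ) (hblock : IsBlocking a δ h) :
    ((fun j => (sn2 P a X (h (j + 1)) - sn2 P a X (h j)) / blockVar P a X h j - 1)
        =O[atTop] fun j => Asum a (h j) ^ (-δ/4) * Real.sqrt (Real.log (Asum a (h j)))) ∧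
    ((fun M => sn2 P a X (h (M + 1)) - ∑ j ∈ Finset.Icc 1 M, blockVar P a X h j)
        =O[atTop] fun M =>
          Asum a (h M) ^ ((1:ℝ) - δ/8) * Real.sqrt (Real.log (Asum a (h M)))) := by
  obtain ⟨hp0, hp1⟩ := hp
  obtain ⟨hδ0, hδ1⟩ := hδ
  have hr : |2 * p - 1| < 1 := abs_lt.2 ⟨by linarith, by linarith⟩
  have hκ : 0 < (1 - (2 * p - 1) ^ 2) / (2 * (1 + (2 * p - 1) ^ 2)) := by
    have : (2 * p - 1) ^ 2 < 1 := by nlinarith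
    positivity
  have hB := hblock.tendsto_Asum hA1
  let c j := geomCov (2 * p - 1) a (Finset.Icc 1 (h j)) (Finset.Icc (h j + 1) (h (j + 1)))
  have hs : ∀ j, 1 ≤ j → sn2 P a X (h (j + 1)) = sn2 P a X (h j) + blockVar P a X h j + 2 * c j :=
    fun j hj => hX.sn2_succ_eq hp0.le hp1.le (hblock.lt_succ hj).le
  obtain ⟨C, hC, hc⟩ := hblock.exists_abs_geomCov_le hr hδ0 hδ1 hA1 hA2
  refine ⟨ratio_sub_one_isBigO (s := fun j => sn2 P a X (h j)) (c := c) hδ0.le hκ hC hB ?_ ?_ ?_,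
    sub_sum_isBigO (s := fun j => sn2 P a X (h j)) hδ0 hC zero_le_three hB
      (by rw [hblock.1, sn2_zero]) hs hc
      (hblock.eventually_nat_le hδ0.le hA1)⟩
  all_goals filter_upwards [eventually_ge_atTop 1, hc] with j hj hcj
  exacts [hs j hj, hX.mul_rpow_le_blockVar hp0.le hp1.le hblock hj,
    hcj j (Finset.mem_Icc.2 ⟨hj, le_rfl⟩)]

/-- **Lemma 6.2.** With the blocking `h` and `B_j = A_{h_j}`, one has
`(s_{h_{j+1}}² − s_{h_j}²)/σ_j² = 1 + O(B_j^{−δ/4}(log B_j)^{1/2})` and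
`s_{h_{M+1}}² − Σ_{j=1}^M σ_j² = O(B_M^{1−δ/8}(log B_M)^{1/2})`. -/
theorem stmt16 {Ω : Type*} [MeasurableSpace Ω] (P : Measure Ω) [IsProbabilityMeasure P]
    (p : ℝ) (hp : p ∈ Set.Ioo (0:ℝ) 1) (hp' : p ≠ 1/2)
    (X : ℕ → Ω → ℝ) (hX : IsERWChain P p X)
    (a : ℕ → ℝ) (δ : ℝ) (hδ : δ ∈ Set.Ioc (0:ℝ) 1)
    (hA1 : Tendsto (Asum a) atTop atTop)
    (hA2 : (fun n => (a n) ^ 2) =O[atTop] fun n => Asum a n ^ (1 - δ))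
    (h : ℕ → ℕ) (hblock : IsBlocking a δ h) :
    ((fun j => (sn2 P a X (h (j + 1)) - sn2 P a X (h j)) / blockVar P a X h j - 1)
        =O[atTop] fun j => Asum a (h j) ^ (-δ/4) * Real.sqrt (Real.log (Asum a (h j)))) ∧
    ((fun M => sn2 P a X (h (M + 1)) - ∑ j ∈ Finset.Icc 1 M, blockVar P a X h j)
        =O[atTop] fun M =>
          Asum a (h M) ^ ((1:ℝ) - δ/8) * Real.sqrt (Real.log (Asum a (h M)))) :=
  stmt16_general P p hp X hX a δ hδ hA1 hA2 h hblock
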